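/- For a positive semidefinite ρ with unit trace and Hermitian H, the quantity δH² := tr(H√ρ H√ρ) − (tr(Hρ))² is nonnegative. -/

import Mathlib

/-!
Write `q = ρ^{1/4}`, the square root of `√ρ`. Then `tr(H√ρH√ρ) = tr((qHq)²)`,
`tr(Hρ) = tr(qHq · √ρ)` and `tr(√ρ²) = tr ρ = 1`, so the inequality is Cauchy–Schwarz for the
Hilbert–Schmidt inner product of the Hermitian matrices `qHq` and `√ρ`.
-/

open ComplexOrder

/-- The old Mathlib `Matrix.PosSemidef.sqrt` (removed from Mathlib), restored with its original
definition. -/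
noncomputable def Matrix.PosSemidef.sqrt {n : Type*} [Fintype n] {𝕜 : Type*} [RCLike 𝕜]
    [DecidableEq n] {A : Matrix n n 𝕜} (hA : A.PosSemidef) : Matrix n n 𝕜 :=
  hA.1.eigenvectorUnitary.1 * Matrix.diagonal (fun i => ((Real.sqrt (hA.1.eigenvalues i) : ℝ) : 𝕜)) *
  (star hA.1.eigenvectorUnitary : Matrix n n 𝕜)

namespace Matrix

open RCLike

variable {n 𝕜 : Type*} [Fintype n] [RCLike 𝕜]

theorem IsHermitian.re_trace_mul_self_nonneg {X : Matrix n n 𝕜} (hX : X.IsHermitian) :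
    0 ≤ re (X * X).trace := by
  have h := (posSemidef_conjTranspose_mul_self X).trace_nonneg
  rw [hX.eq] at h
  exact (RCLike.nonneg_iff.mp h).1

theorem IsHermitian.re_trace_mul_sq_le {A B : Matrix n n 𝕜} (hA : A.IsHermitian)
    (hB : B.IsHermitian) :
    re (A * B).trace ^ 2 ≤ re (A * A).trace * re (B * B).trace := by
  have hquad : ∀ t : ℝ,
      0 ≤ re (B * B).trace * (t * t) + (-2 * re (A * B).trace) * t + re (A * A).trace := by
    intro t
    have hexp : (A - t • B) * (A - t • B)
        = A * A - t • (A * B) - t • (B * A) + (t * t) • (B * B) := by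
      simp only [sub_mul, mul_sub, smul_sub, smul_mul_assoc, mul_smul_comm, smul_smul]
      abel
    have h := (hA.sub (hB.smul (IsSelfAdjoint.all t))).re_trace_mul_self_nonneg
    rw [hexp] at h
    simp only [trace_add, trace_sub, trace_smul, map_add, map_sub, smul_re,
      trace_mul_comm B A] at h
    linarith
  have hdiscrim := discrim_le_zero hquad
  rw [discrim] at hdiscrim
  nlinarith

namespace PosSemidef

variable [DecidableEq n] {A : Matrix n n 𝕜} (hA : A.PosSemidef)

theorem sqrt_eq_conjStarAlgAut : hA.sqrt = Unitary.conjStarAlgAut 𝕜 _ hA.1.eigenvectorUnitary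
    (diagonal fun i => ((Real.sqrt (hA.1.eigenvalues i) : ℝ) : 𝕜)) := rfl

theorem posSemidef_sqrt : hA.sqrt.PosSemidef := by
  rw [sqrt_eq_conjStarAlgAut, Unitary.conjStarAlgAut_apply, star_eq_conjTranspose]
  exact (posSemidef_diagonal_iff.mpr fun i => RCLike.ofReal_nonneg.mpr (Real.sqrt_nonneg _))
    |>.mul_mul_conjTranspose_same _

theorem sqrt_mul_self : hA.sqrt * hA.sqrt = A := by
  rw [sqrt_eq_conjStarAlgAut, ← map_mul, diagonal_mul_diagonal]
  conv_rhs => rw [hA.1.spectral_theorem]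
  congr 2
  funext i
  simp [← RCLike.ofReal_mul, Real.mul_self_sqrt (hA.eigenvalues_nonneg i)]

theorem re_trace_mul_sq_le {H : Matrix n n 𝕜} (hH : H.IsHermitian) :
    re (H * A).trace ^ 2 ≤ re (H * hA.sqrt * H * hA.sqrt).trace * re A.trace := by
  set s := hA.sqrt
  have hs : s.PosSemidef := hA.posSemidef_sqrt
  set q := hs.sqrt
  have hq : q.IsHermitian := hs.posSemidef_sqrt.isHermitian
  have hqq : q * q = s := hs.sqrt_mul_self
  have hss : s * s = A := hA.sqrt_mul_self
  have hqHq : (q * H * q).IsHermitian := by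
    simpa only [hq.eq] using isHermitian_conjTranspose_mul_mul q hH
  have hCS := hqHq.re_trace_mul_sq_le (hqq ▸ hs.isHermitian)
  have hqHq_sq : (q * H * q * (q * H * q)).trace = (H * s * H * s).trace := by
    rw [← hqq]; simp only [mul_assoc]; rw [trace_mul_comm q]; simp only [mul_assoc]
  have hqHq_s : (q * H * q * (q * q)).trace = (H * A).trace := by
    rw [← hss, ← hqq]; simp only [mul_assoc]; rw [trace_mul_comm q]; simp only [mul_assoc]
  rwa [hqHq_sq, hqHq_s, hqq, hss] at hCS

end PosSemidef

end Matrix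

/-- Nonnegativity of `δH² = tr(H√ρH√ρ) − (tr(Hρ))²`. -/
theorem deltaSq_nonneg (n : ℕ) (ρ H : Matrix (Fin n) (Fin n) ℂ)
    (hρ : ρ.PosSemidef) (htr : ρ.trace = 1) (hH : H.IsHermitian) :
    0 ≤ ((H * hρ.sqrt * H * hρ.sqrt).trace).re - (((H * ρ).trace).re) ^ 2 := by
  have hCS := hρ.re_trace_mul_sq_le hH
  rw [htr, RCLike.one_re, mul_one] at hCS
  exact sub_nonneg.mpr hCS
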